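/- arXiv:2511.05907 — 2 statements merged into one kernel-verified Lean document; each statement's English description precedes it below -/
import Mathlib

section
/- Let 0 ≤ s₁ < s₂ ≤ k be integers and define β(s) = 1 if s₁ ≤ (s mod k) < s₂ and β(s) = 0 otherwise. Then β has a finite Fourier expansion β(s) = ∑_{j=0}^{k−1} β_j e^{2πi s j / k} with coefficients β_j = (1/k) ∑_{s=0}^{k−1} β(s) e^{−2πi s j / k}, and ∑_{j=0}^{k−1} |β_j| = O(k^ε) for every ε > 0. -/
open Finset Complex

/-- The indicator `β(s) = 1` if `s₁ ≤ (s mod k) < s₂`, else `0`. -/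
noncomputable def betaInd (k : ℕ) (s₁ s₂ : ℤ) (s : ℤ) : ℂ :=
  if s₁ ≤ s % (k : ℤ) ∧ s % (k : ℤ) < s₂ then 1 else 0

/-- The finite Fourier coefficients of `β`. -/
noncomputable def betaCoeff (k : ℕ) (s₁ s₂ : ℤ) (j : ℕ) : ℂ :=
  (1 / (k : ℂ)) * ∑ s ∈ Finset.range k,
    betaInd k s₁ s₂ s * Complex.exp (-(2 * (Real.pi : ℂ) * Complex.I * s * j) / k)

/-!
With `e(x) = exp(2πix)`, Fourier inversion on `ℤ/kℤ` is the orthogonality relation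
`∑_{j<k} e(mj/k) = k·[k ∣ m]`.
For `0 < j < k`, `β_j` is `1/k` times a geometric sum of `w = e(-j/k)` over `[s₁, s₂)`, so
`|β_j| ≤ 2/(k|w - 1|) = 1/(k sin(πj/k))`. Jordan's inequality in the form `sin(πx) ≥ 2x(1-x)`
turns this into `k/(2j(k-j)) = (1/j + 1/(k-j))/2`, and summing over `j` gives
`∑|β_j| ≤ 1 + H_k ≤ 2 + log k ≤ 2 + k^ε/ε`.
-/

open scoped Real

lemma geom_sum_eq_ite_of_pow_eq_one {K : Type*} [Field K] [DecidableEq K] {w : K} {k : ℕ}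
    (hw : w ^ k = 1) :
    ∑ j ∈ range k, w ^ j = if w = 1 then (k : K) else 0 := by
  split_ifs with h
  · simp [h]
  · rw [geom_sum_eq h, hw, sub_self, zero_div]

lemma norm_geom_sum_Ico_le {𝕜 : Type*} [NormedField 𝕜] {w : 𝕜} (hw : ‖w‖ = 1) (hw₁ : w ≠ 1)
    {a b : ℕ} (hab : a ≤ b) : ‖∑ t ∈ Ico a b, w ^ t‖ ≤ 2 / ‖w - 1‖ := by
  rw [geom_sum_Ico hw₁ hab, norm_div]
  gcongr
  calc ‖w ^ b - w ^ a‖ ≤ ‖w ^ b‖ + ‖w ^ a‖ := norm_sub_le _ _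
    _ = 2 := by rw [norm_pow, norm_pow, hw]; norm_num

lemma two_mul_mul_one_sub_le_sin_pi_mul {x : ℝ} (hx₀ : 0 ≤ x) (hx₁ : x ≤ 1) :
    2 * x * (1 - x) ≤ Real.sin (π * x) := by
  wlog hx : x ≤ 1 / 2 generalizing x
  · have := this (x := 1 - x) (by linarith) (by linarith) (by linarith)
    rw [mul_one_sub π, Real.sin_pi_sub] at this
    linarith
  have hjordan := Real.mul_le_sin (by positivity : 0 ≤ π * x) (by nlinarith [Real.pi_pos])
  have : 2 / π * (π * x) = 2 * x := by field_simp
  nlinarith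

lemma norm_exp_mul_I_sub_one (θ : ℝ) : ‖exp (θ * I) - 1‖ = 2 * |Real.sin (θ / 2)| := by
  rw [mul_comm, norm_exp_I_mul_ofReal_sub_one, norm_mul, Real.norm_eq_abs]
  norm_num

lemma exp_two_pi_I_mul_div_eq_zpow (k : ℕ) (n : ℤ) :
    exp (2 * π * I * n / k) = exp (2 * π * I / k) ^ n := by
  rw [← exp_int_mul]
  ring_nf

lemma sum_range_exp_two_pi_I_mul_div {k : ℕ} (hk : k ≠ 0) (m : ℤ) :
    ∑ j ∈ range k, exp (2 * π * I * m * j / k) = if (k : ℤ) ∣ m then (k : ℂ) else 0 := by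
  have hζ := isPrimitiveRoot_exp k hk
  set ζ := exp (2 * π * I / k)
  have hterm (j : ℕ) : exp (2 * π * I * m * j / k) = (ζ ^ m) ^ j := by
    rw [← zpow_natCast, ← zpow_mul, ← exp_two_pi_I_mul_div_eq_zpow]
    push_cast
    ring_nf
  have hroot : (ζ ^ m) ^ k = 1 := by
    rw [← zpow_natCast, ← zpow_mul, mul_comm, zpow_mul, zpow_natCast, hζ.pow_eq_one, one_zpow]
  simp_rw [hterm, geom_sum_eq_ite_of_pow_eq_one hroot, hζ.zpow_eq_one_iff_dvd]

lemma Function.Periodic.sum_range_mul_ite_dvd_sub {k : ℕ} (hk : k ≠ 0) {f : ℤ → ℂ}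
    (hf : Function.Periodic f k) (s : ℤ) :
    ∑ t ∈ range k, f t * (if (k : ℤ) ∣ s - t then (k : ℂ) else 0) = k * f s := by
  have hk' : (0 : ℤ) < k := by positivity
  have hs₀ := Int.emod_nonneg s hk'.ne'
  have hs₁ := Int.emod_lt_of_pos s hk'
  have hdvd_iff {t : ℕ} (ht : t ∈ range k) : (k : ℤ) ∣ s - t ↔ t = (s % k).toNat := by
    rw [← Int.modEq_iff_dvd, Int.ModEq, Int.emod_eq_of_lt (by positivity) (by simpa using ht)]
    omega
  have hf_mod : f (s % k) = f s := by
    rw [Int.emod_def, mul_comm]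
    exact hf.sub_int_mul_eq _
  calc _ = ∑ t ∈ range k, if t = (s % k).toNat then k * f t else 0 :=
        sum_congr rfl fun t ht => by simp only [hdvd_iff ht]; split_ifs <;> ring
    _ = k * f s := by
        rw [sum_ite_eq', if_pos (mem_range.2 (by omega)), Int.toNat_of_nonneg hs₀, hf_mod]

lemma Function.Periodic.eq_sum_dft_mul_exp {k : ℕ} (hk : k ≠ 0) {f : ℤ → ℂ}
    (hf : Function.Periodic f k) (s : ℤ) :
    f s = ∑ j ∈ range k, (1 / (k : ℂ) * ∑ t ∈ range k, f t * exp (-(2 * π * I * t * j) / k)) *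
      exp (2 * π * I * s * j / k) := by
  have hkC : (k : ℂ) ≠ 0 := by exact_mod_cast hk
  symm
  calc _ = 1 / (k : ℂ) *
        ∑ t ∈ range k, f t * ∑ j ∈ range k, exp (2 * π * I * (s - t : ℤ) * j / k) := by
        simp_rw [mul_sum, sum_mul]
        rw [sum_comm]
        refine sum_congr rfl fun t _ => sum_congr rfl fun j _ => ?_
        rw [mul_assoc, mul_assoc, ← exp_add]
        push_cast
        ring_nf
    _ = f s := by
        simp_rw [sum_range_exp_two_pi_I_mul_div hk, hf.sum_range_mul_ite_dvd_sub hk]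
        field_simp

lemma betaInd_periodic (k : ℕ) (s₁ s₂ : ℤ) : Function.Periodic (betaInd k s₁ s₂) k := by
  intro s
  simp only [betaInd, Int.add_emod_right]

lemma betaCoeff_natCast_eq_geom_sum {k a b : ℕ} (hbk : b ≤ k) (j : ℕ) :
    betaCoeff k a b j = 1 / k * ∑ t ∈ Ico a b, exp (↑(-(2 * π * j / k)) * I) ^ t := by
  have hterm (t : ℕ) (ht : t ∈ range k) :
      betaInd k a b t * exp (-(2 * π * I * t * j) / k) =
        if t ∈ Ico a b then exp (↑(-(2 * π * j / k)) * I) ^ t else 0 := by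
    have htk : (t : ℤ) < k := by simpa using ht
    rw [betaInd, Int.emod_eq_of_lt (by positivity) htk, ← exp_nat_mul]
    simp only [mem_Ico, Nat.cast_le, Nat.cast_lt]
    split_ifs
    · push_cast
      ring_nf
    · simp
  rw [betaCoeff, sum_congr rfl hterm, sum_ite_mem, inter_eq_right.2]
  exact fun t ht => mem_range.2 ((mem_Ico.1 ht).2.trans_le hbk)

lemma norm_betaCoeff_le_one {k a b : ℕ} (hbk : b ≤ k) (j : ℕ) : ‖betaCoeff k a b j‖ ≤ 1 := by
  rcases Nat.eq_zero_or_pos k with rfl | hk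
  · simp [betaCoeff]
  have hk' : (0 : ℝ) < k := by exact_mod_cast hk
  rw [betaCoeff_natCast_eq_geom_sum hbk, norm_mul, norm_div, norm_one, norm_natCast,
    div_mul_eq_mul_div, one_mul, div_le_one hk']
  calc _ ≤ ∑ t ∈ Ico a b, ‖exp (↑(-(2 * π * j / k)) * I) ^ t‖ := norm_sum_le _ _
    _ = (b - a : ℕ) := by
        simp only [norm_pow, norm_exp_ofReal_mul_I, one_pow, sum_const, Nat.card_Ico,
          nsmul_eq_mul, mul_one]
    _ ≤ k := by exact_mod_cast (Nat.sub_le b a).trans hbk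

lemma norm_betaCoeff_le {k a b j : ℕ} (hab : a ≤ b) (hbk : b ≤ k) (hj₀ : 0 < j) (hjk : j < k) :
    ‖betaCoeff k a b j‖ ≤ k / (2 * j * (k - j)) := by
  have hk : (0 : ℝ) < k := by exact_mod_cast hj₀.trans hjk
  have hj : (0 : ℝ) < j := by exact_mod_cast hj₀
  have hjk' : (j : ℝ) < k := by exact_mod_cast hjk
  have hx₁ : (0 : ℝ) < 1 - j / k := sub_pos.2 ((div_lt_one hk).2 hjk')
  set w := exp (↑(-(2 * π * j / k)) * I)
  have hsin : 2 * (j / k) * (1 - j / k) ≤ Real.sin (π * (j / k)) :=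
    two_mul_mul_one_sub_le_sin_pi_mul (by positivity) ((div_le_one hk).2 hjk'.le)
  have hsin_pos : 0 < Real.sin (π * (j / k)) :=
    lt_of_lt_of_le (by positivity) hsin
  have hw_sub : ‖w - 1‖ = 2 * Real.sin (π * (j / k)) := by
    rw [norm_exp_mul_I_sub_one, show -(2 * π * j / k) / 2 = -(π * (j / k)) by ring,
      Real.sin_neg, abs_neg, abs_of_pos hsin_pos]
  have hw₁ : w ≠ 1 := by
    intro h
    rw [h, sub_self, norm_zero] at hw_sub
    linarith
  rw [betaCoeff_natCast_eq_geom_sum hbk, norm_mul, norm_div, norm_one, norm_natCast]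
  calc _ ≤ 1 / k * (2 / ‖w - 1‖) := by
        gcongr
        exact norm_geom_sum_Ico_le (norm_exp_ofReal_mul_I _) hw₁ hab
    _ ≤ 1 / k * (1 / (2 * (j / k) * (1 - j / k))) := by
        rw [hw_sub, ← div_div, div_self two_ne_zero]
        gcongr
    _ = k / (2 * j * (k - j)) := by
        field_simp

lemma sum_Ico_div_two_mul_mul_sub_le (k : ℕ) :
    ∑ j ∈ Ico 1 k, (k : ℝ) / (2 * j * (k - j)) ≤ 1 + Real.log k := by
  have hsplit : ∀ j ∈ Ico 1 k, (k : ℝ) / (2 * j * (k - j)) =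
      (1 / j + 1 / ((k - j : ℕ) : ℝ)) / 2 := by
    intro j hj
    obtain ⟨hj₀, hjk⟩ := mem_Ico.1 hj
    have hj : (0 : ℝ) < j := by exact_mod_cast hj₀
    have hkj : (0 : ℝ) < k - j := sub_pos.2 (by exact_mod_cast hjk)
    rw [Nat.cast_sub hjk.le]
    field_simp
    ring
  have hreflect : ∑ j ∈ Ico 1 k, 1 / ((k - j : ℕ) : ℝ) = ∑ j ∈ Ico 1 k, 1 / (j : ℝ) := by
    rw [sum_Ico_reflect (fun j => 1 / (j : ℝ)) 1 (Nat.le_succ k), Nat.add_sub_cancel,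
      Nat.add_sub_cancel_left]
  calc _ = ∑ j ∈ Ico 1 k, 1 / (j : ℝ) := by
        rw [sum_congr rfl hsplit, ← sum_div, sum_add_distrib, hreflect]
        ring
    _ ≤ ∑ j ∈ Icc 1 k, (j : ℝ)⁻¹ := by
        simp only [one_div]
        exact sum_le_sum_of_subset_of_nonneg Ico_subset_Icc_self fun _ _ _ => by positivity
    _ = harmonic k := by simp [harmonic_eq_sum_Icc]
    _ ≤ 1 + Real.log k := harmonic_le_one_add_log k

lemma sum_norm_betaCoeff_le {k a b : ℕ} (hk : 0 < k) (hab : a ≤ b) (hbk : b ≤ k) :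
    ∑ j ∈ range k, ‖betaCoeff k a b j‖ ≤ 2 + Real.log k := by
  rw [range_eq_Ico, sum_eq_sum_Ico_succ_bot hk]
  have hrest := (sum_le_sum fun j (hj : j ∈ Ico 1 k) => norm_betaCoeff_le hab hbk
    (mem_Ico.1 hj).1 (mem_Ico.1 hj).2).trans (sum_Ico_div_two_mul_mul_sub_le k)
  linarith [norm_betaCoeff_le_one (a := a) hbk 0]

/-- `β` has a finite Fourier expansion with coefficients `β_j`, and
`∑_j |β_j| = O(k^ε)` for every `ε > 0`. -/
theorem beta_fourier_expansion_and_bound :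
    ∀ ε : ℝ, 0 < ε → ∃ C : ℝ, ∀ (k : ℕ) (s₁ s₂ : ℤ), 0 < k →
      0 ≤ s₁ → s₁ < s₂ → s₂ ≤ (k : ℤ) →
      ((∀ s : ℤ, betaInd k s₁ s₂ s =
          ∑ j ∈ Finset.range k,
            betaCoeff k s₁ s₂ j * Complex.exp (2 * (Real.pi : ℂ) * Complex.I * s * j / k)) ∧
        ∑ j ∈ Finset.range k, ‖betaCoeff k s₁ s₂ j‖ ≤ C * (k : ℝ) ^ ε) := by
  intro ε hε
  refine ⟨2 + 1 / ε, fun k s₁ s₂ hk h₁ h₁₂ h₂ =>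
    ⟨(betaInd_periodic k s₁ s₂).eq_sum_dft_mul_exp hk.ne', ?_⟩⟩
  lift s₁ to ℕ using h₁
  lift s₂ to ℕ using by omega
  have hkε : 1 ≤ (k : ℝ) ^ ε := Real.one_le_rpow (by exact_mod_cast hk) hε.le
  calc _ ≤ 2 + Real.log k := sum_norm_betaCoeff_le hk (by omega) (by omega)
    _ ≤ 2 + (k : ℝ) ^ ε / ε := by gcongr; exact Real.log_le_rpow_div (Nat.cast_nonneg k) hε
    _ ≤ (2 + 1 / ε) * (k : ℝ) ^ ε := by
        rw [add_mul, div_eq_mul_one_div, mul_comm]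
        gcongr
        linarith
end

section
/- Let {t(n)}, {A(n)}, {δ(n)} be sequences of positive reals with δ(n) → 0, and suppose for fixed d ≥ 1 there exist reals g_3(n), ..., g_d(n) with g_i(n) = o(δ(n)^i) such that log(t(n+j)/t(n)) = A(n)j − δ(n)²j² + ∑_{i=3}^d g_i(n)j^i + o(δ(n)^d) as n → ∞, uniformly for 0 ≤ j ≤ d. Then the renormalized Jensen polynomials satisfy lim_{n→∞} (δ(n)^{−d}/t(n)) · J_t^{d,n}((δ(n)X − 1)/e^{A(n)}) = H_d(X), the d-th Hermite polynomial, with convergence of coefficients. -/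
/-!
Put `F_n(j) = t(n+j) / (t(n) e^{A(n) j})`. Expanding `(δX - 1)^j`, the coefficient of `X^i` in
the renormalised Jensen polynomial is `C(d,i) (-1)^N δ^{-N} Δ^N F_n(i)` with `N = d - i`, an
`N`-th forward difference. By hypothesis `F_n(j) = exp (ψ_n(j) + o(δ^d))` for `j ≤ d`, where
`ψ_n = -δ²X² + ∑ g_i X^i`; since `ψ_n(j) = O(δ)`, truncating the exponential series shows that
on `0, …, d` the sequence `F_n` is, up to `o(δ^d)`, the polynomial `T_n = ∑_{k ≤ d} ψ_n^k / k!`.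
After the substitution `X ↦ X / δ`, `ψ_n` tends coefficientwise to `-X²`, so the coefficient of
`X^m` in `T_n` is `(r_m + o(1)) δ^m`, where `r` is the truncated series of `e^{-X²}`. As `Δ^N`
kills `X^m` for `m < N` and maps `X^N` to `N!`, `δ^{-N} Δ^N T_n(i) → N! r_N`, and
`C(d,i) N! r_{d-i}` is the coefficient of `X^i` in `H_d`.
-/

open Finset Polynomial Filter Asymptotics

noncomputable def gorzHermite : ℕ → Polynomial ℝ
  | 0 => 1
  | 1 => Polynomial.X
  | (n + 2) => Polynomial.X * gorzHermite (n + 1) - Polynomial.C (2 * (n + 1) : ℝ) * gorzHermite n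

noncomputable def jensenPoly (t : ℕ → ℝ) (d n : ℕ) : Polynomial ℝ :=
  ∑ i ∈ Finset.range (d + 1), Polynomial.C ((d.choose i : ℝ) * t (n + i)) * Polynomial.X ^ i

open scoped Nat Topology
open fwdDiff

section CoeffwiseTendsto

variable {ι R : Type*} [CommSemiring R] [TopologicalSpace R] {l : Filter ι} {P Q : ι → R[X]}
  {p q : R[X]}

def CoeffwiseTendsto (P : ι → R[X]) (l : Filter ι) (p : R[X]) : Prop :=
  ∀ m, Tendsto (fun n => (P n).coeff m) l (𝓝 (p.coeff m))

theorem coeffwiseTendsto_const (p : R[X]) : CoeffwiseTendsto (fun _ => p) l p :=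
  fun _ => tendsto_const_nhds

theorem coeffwiseTendsto_C {c : ι → R} {c₀ : R} (h : Tendsto c l (𝓝 c₀)) :
    CoeffwiseTendsto (fun n => C (c n)) l (C c₀) := by
  intro m
  rcases eq_or_ne m 0 with rfl | hm
  · simpa using h
  · simpa [coeff_C, hm] using tendsto_const_nhds

theorem CoeffwiseTendsto.add [ContinuousAdd R] (hP : CoeffwiseTendsto P l p)
    (hQ : CoeffwiseTendsto Q l q) : CoeffwiseTendsto (fun n => P n + Q n) l (p + q) :=
  fun m => by simpa only [coeff_add] using (hP m).add (hQ m)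

theorem CoeffwiseTendsto.mul [IsTopologicalSemiring R] (hP : CoeffwiseTendsto P l p)
    (hQ : CoeffwiseTendsto Q l q) : CoeffwiseTendsto (fun n => P n * Q n) l (p * q) :=
  fun m => by
    simpa only [coeff_mul] using tendsto_finsetSum _ fun x _ => (hP x.1).mul (hQ x.2)

theorem CoeffwiseTendsto.pow [IsTopologicalSemiring R] (hP : CoeffwiseTendsto P l p) (k : ℕ) :
    CoeffwiseTendsto (fun n => P n ^ k) l (p ^ k) := by
  induction k with
  | zero => simpa using coeffwiseTendsto_const 1
  | succ k ih => simpa only [pow_succ] using ih.mul hP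

theorem CoeffwiseTendsto.sum [ContinuousAdd R] {κ : Type*} (s : Finset κ) {F : κ → ι → R[X]}
    {f : κ → R[X]} (h : ∀ k ∈ s, CoeffwiseTendsto (F k) l (f k)) :
    CoeffwiseTendsto (fun n => ∑ k ∈ s, F k n) l (∑ k ∈ s, f k) :=
  fun m => by simpa only [finsetSum_coeff] using tendsto_finsetSum s fun k hk => h k hk m

end CoeffwiseTendsto

noncomputable def expTrunc (K : ℕ) (p : ℝ[X]) : ℝ[X] :=
  ∑ k ∈ range (K + 1), C (k ! : ℝ)⁻¹ * p ^ k

theorem eval_expTrunc (K : ℕ) (p : ℝ[X]) (x : ℝ) :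
    (expTrunc K p).eval x = ∑ k ∈ range (K + 1), p.eval x ^ k / k ! := by
  simp [expTrunc, eval_finsetSum, div_eq_inv_mul]

theorem expTrunc_comp (K : ℕ) (p q : ℝ[X]) : (expTrunc K p).comp q = expTrunc K (p.comp q) := by
  simp [expTrunc, mul_comp, pow_comp]

theorem natDegree_expTrunc_le (K : ℕ) (p : ℝ[X]) :
    (expTrunc K p).natDegree ≤ K * p.natDegree :=
  natDegree_sum_le_of_forall_le _ _ fun k hk =>
    (natDegree_C_mul_le _ _).trans <| (natDegree_pow_le_of_le k le_rfl).trans <|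
      Nat.mul_le_mul_right _ (Nat.lt_succ_iff.mp (mem_range.mp hk))

theorem coeff_expTrunc_neg_X_sq (K N : ℕ) :
    (expTrunc K (-X ^ 2)).coeff N =
      ∑ k ∈ range (K + 1), if N = 2 * k then (-1 : ℝ) ^ k / k ! else 0 := by
  simp only [expTrunc, finsetSum_coeff, coeff_C_mul]
  refine sum_congr rfl fun k _ => ?_
  rw [show (-X ^ 2 : ℝ[X]) ^ k = C ((-1) ^ k) * X ^ (2 * k) by
      rw [neg_eq_neg_one_mul, mul_pow, ← pow_mul]; simp,
    coeff_C_mul, coeff_X_pow]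
  split_ifs <;> simp [div_eq_inv_mul]

theorem CoeffwiseTendsto.expTrunc {ι : Type*} {l : Filter ι} {P : ι → ℝ[X]} {p : ℝ[X]}
    (hP : CoeffwiseTendsto P l p) (K : ℕ) :
    CoeffwiseTendsto (fun n => expTrunc K (P n)) l (expTrunc K p) :=
  CoeffwiseTendsto.sum _ fun k _ => (coeffwiseTendsto_const _).mul (hP.pow k)

theorem sum_choose_mul_choose_mul_neg_one_pow (w : ℕ → ℝ) (d i : ℕ) :
    ∑ j ∈ range (d + 1), d.choose j * (j.choose i * (-1) ^ (j - i)) * w j =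
      d.choose i * (-1) ^ (d - i) * Δ_[1] ^[d - i] w i := by
  rcases lt_or_ge d i with hdi | hid
  · rw [Nat.choose_eq_zero_of_lt hdi, Nat.cast_zero, zero_mul, zero_mul]
    refine sum_eq_zero fun j hj => ?_
    rw [Nat.choose_eq_zero_of_lt (n := j) (k := i) (by have := mem_range.mp hj; omega)]
    simp
  obtain ⟨N, rfl⟩ := Nat.exists_eq_add_of_le hid
  rw [show i + N + 1 = i + (N + 1) by ring, sum_range_add, sum_eq_zero fun j hj => by
      rw [Nat.choose_eq_zero_of_lt (mem_range.mp hj)]; simp,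
    zero_add, Nat.add_sub_cancel_left, fwdDiff_iter_eq_sum_shift, mul_sum]
  refine sum_congr rfl fun l hl => ?_
  have hl : l ≤ N := Nat.lt_succ_iff.mp (mem_range.mp hl)
  have hchoose : ((i + N).choose (i + l) * (i + l).choose i : ℝ) =
      (i + N).choose i * N.choose l := by
    exact_mod_cast (by rw [Nat.choose_mul (by omega)]; simp)
  have hsign : ((-1 : ℝ) ^ N * (-1) ^ (N - l)) = (-1) ^ l := by
    rw [← pow_add, show N + (N - l) = l + 2 * (N - l) by omega, pow_add, pow_mul]; simp
  rw [Nat.add_sub_cancel_left, zsmul_eq_mul, nsmul_one]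
  push_cast
  linear_combination (w (i + l) * (-1) ^ l) * hchoose -
    ((i + N).choose i * N.choose l * w (i + l)) * hsign

theorem fwdDiff_iter_comp_natCast (f : ℝ → ℝ) (N i : ℕ) :
    Δ_[1] ^[N] (fun j : ℕ => f j) i = Δ_[1] ^[N] f i := by
  simp [fwdDiff_iter_eq_sum_shift]

theorem fwdDiff_iter_eval_eq_sum (P : ℝ[X]) {K : ℕ} (hK : P.natDegree < K) (N : ℕ) (y : ℝ) :
    Δ_[1] ^[N] P.eval y = ∑ m ∈ range K, P.coeff m * Δ_[1] ^[N] (· ^ m) y := by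
  have : P.eval = ∑ m ∈ range K, P.coeff m • fun x : ℝ => x ^ m := by
    ext x; simp [eval_eq_sum_range' hK]
  rw [this, fwdDiff_iter_finsetSum]
  simp

theorem tendsto_pow_div_pow_mul_fwdDiff_iter_pow {ι : Type*} {l : Filter ι} {δ : ι → ℝ}
    (hδ : ∀ n, δ n ≠ 0) (hδ0 : Tendsto δ l (𝓝 0)) (m N : ℕ) (y : ℝ) :
    Tendsto (fun n => δ n ^ m / δ n ^ N * Δ_[1] ^[N] (· ^ m) y) l
      (𝓝 (if m = N then (N ! : ℝ) else 0)) := by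
  rcases lt_trichotomy m N with h | rfl | h
  · simpa [fwdDiff_iter_pow_eq_zero_of_lt h, h.ne] using tendsto_const_nhds
  · simpa [fwdDiff_iter_eq_factorial, div_self (pow_ne_zero _ (hδ _))] using tendsto_const_nhds
  · have hpow : ∀ n, δ n ^ m / δ n ^ N = δ n ^ (m - N) :=
      fun n => (pow_sub₀ _ (hδ n) h.le).symm
    simpa [hpow, h.ne', zero_pow (Nat.sub_ne_zero_of_lt h)] using
      (hδ0.pow (m - N)).mul_const (Δ_[1] ^[N] (· ^ m) y)

/-- `hR` says that `(R n).coeff m = (r.coeff m + o(1)) * δ n ^ m`. -/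
theorem tendsto_fwdDiff_iter_eval_div_pow {ι : Type*} {l : Filter ι} {δ : ι → ℝ}
    {R : ι → ℝ[X]} {r : ℝ[X]} {D : ℕ} (hδ : ∀ n, δ n ≠ 0) (hδ0 : Tendsto δ l (𝓝 0))
    (hdeg : ∀ n, (R n).natDegree ≤ D)
    (hR : CoeffwiseTendsto (fun n => (R n).comp (C (δ n)⁻¹ * X)) l r) (N : ℕ) (y : ℝ) :
    Tendsto (fun n => Δ_[1] ^[N] (R n).eval y / δ n ^ N) l (𝓝 (N ! * r.coeff N)) := by
  have hN : N ∈ range (D + N + 1) := mem_range.mpr (by omega)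
  have hsum : ∀ n, Δ_[1] ^[N] (R n).eval y / δ n ^ N = ∑ m ∈ range (D + N + 1),
      ((R n).comp (C (δ n)⁻¹ * X)).coeff m * (δ n ^ m / δ n ^ N * Δ_[1] ^[N] (· ^ m) y) := by
    intro n
    rw [fwdDiff_iter_eval_eq_sum (K := D + N + 1) _ (by have := hdeg n; omega), sum_div]
    refine sum_congr rfl fun m _ => ?_
    rw [comp_C_mul_X_coeff, inv_pow]
    field_simp [pow_ne_zero m (hδ n)]
  have h := tendsto_finsetSum (range (D + N + 1)) fun m _ =>
    (hR m).mul (tendsto_pow_div_pow_mul_fwdDiff_iter_pow hδ hδ0 m N y)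
  simp only [mul_ite, mul_zero, sum_ite_eq', if_pos hN] at h
  rw [mul_comm]
  exact h.congr fun n => (hsum n).symm

section Asymptotics

variable {α : Type*} {l : Filter α}

theorem isBigO_pow_pow_of_le {δ : α → ℝ} (hδ0 : Tendsto δ l (𝓝 0)) {m n : ℕ} (h : m ≤ n) :
    (fun x => δ x ^ n) =O[l] fun x => δ x ^ m := by
  rcases h.eq_or_lt with rfl | h
  · exact isBigO_refl _ _
  · exact ((isLittleO_pow_pow h).comp_tendsto hδ0).isBigO

theorem isLittleO_exp_add_sub_sum_range {x e u : α → ℝ} {K : ℕ} (hx : Tendsto x l (𝓝 0))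
    (hxK : (fun n => x n ^ K) =o[l] u) (he : e =o[l] u) (hu : u =O[l] fun _ => (1 : ℝ)) :
    (fun n => Real.exp (x n + e n) - ∑ k ∈ range K, x n ^ k / k !) =o[l] u := by
  have he0 : Tendsto e l (𝓝 0) := (isLittleO_one_iff ℝ).mp (he.trans_isBigO hu)
  have hexp_x : (fun n => Real.exp (x n)) =O[l] fun _ => (1 : ℝ) :=
    ((Real.continuous_exp.tendsto 0).comp hx).isBigO_one ℝ
  have hexp_e : (fun n => Real.exp (e n) - 1) =O[l] e := by
    simpa [Function.comp_def] using (Real.exp_sub_sum_range_isBigO_pow 1).comp_tendsto he0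
  have h₁ := (hexp_x.mul_isLittleO (hexp_e.trans_isLittleO he)).congr_right
    fun n => one_mul (u n)
  have h₂ := ((Real.exp_sub_sum_range_isBigO_pow K).comp_tendsto hx).trans_isLittleO hxK
  refine (h₁.add h₂).congr_left fun n => ?_
  simp only [Function.comp_apply, Real.exp_add]
  ring

theorem isLittleO_fwdDiff_iter_sub {f g : α → ℕ → ℝ} {u : α → ℝ} {N i : ℕ}
    (h : ∀ k ≤ N, (fun n => f n (i + k) - g n (i + k)) =o[l] u) :
    (fun n => Δ_[1] ^[N] (f n) i - Δ_[1] ^[N] (g n) i) =o[l] u := by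
  simp only [fwdDiff_iter_eq_sum_shift, ← sum_sub_distrib, zsmul_eq_mul, nsmul_one, ← mul_sub]
  exact IsLittleO.fun_sum fun k hk =>
    (h k (Nat.lt_succ_iff.mp (mem_range.mp hk))).const_mul_left _

end Asymptotics

theorem coeff_gorzHermite_add_two_zero (n : ℕ) :
    (gorzHermite (n + 2)).coeff 0 = -(2 * (n + 1)) * (gorzHermite n).coeff 0 := by
  rw [gorzHermite, coeff_sub, coeff_C_mul, mul_coeff_zero, coeff_X_zero]
  ring

theorem coeff_gorzHermite_add_two_succ (n i : ℕ) :
    (gorzHermite (n + 2)).coeff (i + 1) =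
      (gorzHermite (n + 1)).coeff i - 2 * (n + 1) * (gorzHermite n).coeff (i + 1) := by
  rw [gorzHermite, coeff_sub, coeff_C_mul, coeff_X_mul]

theorem coeff_gorzHermite_of_lt {d i : ℕ} (h : d < i) : (gorzHermite d).coeff i = 0 := by
  induction d using gorzHermite.induct generalizing i with
  | case1 => simp [gorzHermite, coeff_one, h.ne']
  | case2 => simp [gorzHermite, coeff_X, h.ne]
  | case3 n ih₁ ih₀ =>
    obtain _ | i := i
    · omega
    rw [coeff_gorzHermite_add_two_succ, ih₁ (by omega), ih₀ (by omega)]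
    ring

theorem coeff_gorzHermite_of_odd {d i : ℕ} (h : Odd (d + i)) : (gorzHermite d).coeff i = 0 := by
  rw [Nat.odd_iff] at h
  induction d using gorzHermite.induct generalizing i with
  | case1 => simp [gorzHermite, coeff_one]; omega
  | case2 => simp [gorzHermite, coeff_X]; omega
  | case3 n ih₁ ih₀ =>
    obtain _ | i := i
    · rw [coeff_gorzHermite_add_two_zero, ih₀ (by omega), mul_zero]
    · rw [coeff_gorzHermite_add_two_succ, ih₁ (by omega), ih₀ (by omega)]
      ring

theorem coeff_gorzHermite_add_two_mul_mul_factorial (i k : ℕ) :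
    (gorzHermite (i + 2 * k)).coeff i * (i ! * k !) = (-1) ^ k * (i + 2 * k)! := by
  generalize hd : i + 2 * k = d
  induction d using gorzHermite.induct generalizing i k with
  | case1 =>
    obtain ⟨rfl, rfl⟩ : i = 0 ∧ k = 0 := by omega
    simp [gorzHermite]
  | case2 =>
    obtain ⟨rfl, rfl⟩ : i = 1 ∧ k = 0 := by omega
    simp [gorzHermite]
  | case3 n ih₁ ih₀ =>
    obtain _ | i := i
    · obtain _ | k := k
      · omega
      obtain rfl : n = 2 * k := by omega
      have h₀ := ih₀ 0 k (by omega)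
      rw [coeff_gorzHermite_add_two_zero]
      push_cast [Nat.factorial_succ] at h₀ ⊢
      linear_combination (-(2 * (2 * (k : ℝ) + 1)) * (k + 1)) * h₀
    · have h₁ := ih₁ i k (by omega)
      rw [coeff_gorzHermite_add_two_succ]
      obtain _ | k := k
      · obtain rfl : i = n + 1 := by omega
        rw [coeff_gorzHermite_of_lt (by omega : n < n + 1 + 1)]
        push_cast [Nat.factorial_succ] at h₁ ⊢
        linear_combination ((n : ℝ) + 2) * h₁
      · obtain rfl : n = i + 1 + 2 * k := by omega
        have h₀ := ih₀ (i + 1) k rfl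
        push_cast [Nat.factorial_succ] at h₁ h₀ ⊢
        linear_combination ((i : ℝ) + 1) * h₁ - (2 * ((i : ℝ) + 1 + 2 * k + 1) * (k + 1)) * h₀

/-- `(-1) ^ N = 1` whenever the right side is nonzero; the sign is the one produced by
`sum_choose_mul_choose_mul_neg_one_pow`. -/
theorem coeff_gorzHermite_eq_choose_mul_coeff_expTrunc (i N K : ℕ) (hN : N ≤ 2 * K) :
    (gorzHermite (i + N)).coeff i =
      (i + N).choose i * (-1) ^ N * (N ! * (expTrunc K (-X ^ 2)).coeff N) := by
  rw [coeff_expTrunc_neg_X_sq]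
  obtain ⟨k, rfl | rfl⟩ := N.even_or_odd'
  · rw [sum_eq_single k (fun j _ hj => if_neg (by omega)) (fun hk => by simp at hk; omega),
      if_pos rfl,
      eq_div_of_mul_eq (by positivity) (coeff_gorzHermite_add_two_mul_mul_factorial i k)]
    have h := Nat.add_choose_mul_factorial_mul_factorial i (2 * k)
    rw [← Nat.choose_symm_add] at h
    rw [← h, Even.neg_one_pow ⟨k, two_mul k⟩]
    push_cast
    field_simp
  · rw [coeff_gorzHermite_of_odd (by rw [Nat.odd_iff]; omega),
      sum_eq_zero fun j _ => if_neg (by omega)]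
    simp

theorem coeff_jensenPoly_comp (t : ℕ → ℝ) (d n i : ℕ) (u v : ℝ) :
    ((jensenPoly t d n).comp (C u * (C v * X - 1))).coeff i =
      v ^ i * (d.choose i * (-1) ^ (d - i) * Δ_[1] ^[d - i] (fun j => t (n + j) * u ^ j) i) := by
  have hpow : ∀ j : ℕ, (C u * (C v * X - 1)) ^ j =
      C (u ^ j) * ((X + C (-1 : ℝ)) ^ j).comp (C v * X) := by
    intro j
    simp [mul_pow, sub_eq_add_neg]
  rw [← sum_choose_mul_choose_mul_neg_one_pow, mul_sum]
  simp only [jensenPoly, Polynomial.sum_comp, mul_comp, C_comp, X_pow_comp, hpow, finsetSum_coeff,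
    ← mul_assoc, ← C_mul, coeff_C_mul, comp_C_mul_X_coeff, coeff_X_add_C_pow]
  refine sum_congr rfl fun j _ => ?_
  ring

noncomputable def jensenExponent (δ : ℕ → ℝ) (g : ℕ → ℕ → ℝ) (d n : ℕ) : ℝ[X] :=
  C (-δ n ^ 2) * X ^ 2 + ∑ i ∈ Icc 3 d, C (g i n) * X ^ i

section JensenExponent

variable {δ : ℕ → ℝ} {g : ℕ → ℕ → ℝ} {d : ℕ}

theorem eval_jensenExponent (n : ℕ) (x : ℝ) :
    (jensenExponent δ g d n).eval x = -δ n ^ 2 * x ^ 2 + ∑ i ∈ Icc 3 d, g i n * x ^ i := by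
  simp [jensenExponent, eval_finsetSum]

theorem natDegree_jensenExponent_le {n : ℕ} : (jensenExponent δ g d n).natDegree ≤ d + 2 := by
  refine natDegree_add_le_of_degree_le ((natDegree_C_mul_X_pow_le _ 2).trans (by omega)) ?_
  exact natDegree_sum_le_of_forall_le _ _ fun i hi =>
    (natDegree_C_mul_X_pow_le _ i).trans (by have := (mem_Icc.mp hi).2; omega)

theorem isBigO_eval_jensenExponent (hδ0 : Tendsto δ atTop (𝓝 0))
    (hg : ∀ i, 3 ≤ i → i ≤ d → (fun n => g i n) =o[atTop] fun n => δ n ^ i) (x : ℝ) :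
    (fun n => (jensenExponent δ g d n).eval x) =O[atTop] δ := by
  have hpow : ∀ m, 1 ≤ m → (fun n => δ n ^ m) =O[atTop] δ := fun m hm => by
    simpa using isBigO_pow_pow_of_le hδ0 hm
  simp only [eval_jensenExponent]
  refine IsBigO.add ?_ (IsBigO.fun_sum fun i hi => ?_)
  · exact ((hpow 2 (by norm_num)).const_mul_left (-x ^ 2)).congr_left fun n => by ring
  · obtain ⟨h3, hd⟩ := mem_Icc.mp hi
    exact (((hg i h3 hd).isBigO.trans (hpow i (by omega))).const_mul_left (x ^ i)).congr_left
      fun n => by ring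

theorem coeffwiseTendsto_jensenExponent_comp (hδ : ∀ n, δ n ≠ 0)
    (hg : ∀ i, 3 ≤ i → i ≤ d → (fun n => g i n) =o[atTop] fun n => δ n ^ i) :
    CoeffwiseTendsto (fun n => (jensenExponent δ g d n).comp (C (δ n)⁻¹ * X)) atTop (-X ^ 2) := by
  have hcomp : ∀ n, (jensenExponent δ g d n).comp (C (δ n)⁻¹ * X) =
      -X ^ 2 + ∑ i ∈ Icc 3 d, C (g i n / δ n ^ i) * X ^ i := by
    intro n
    simp only [jensenExponent, add_comp, Polynomial.sum_comp, mul_comp, C_comp, X_pow_comp,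
      mul_pow, ← C_pow, ← mul_assoc, ← C_mul, div_eq_mul_inv, inv_pow]
    rw [show -δ n ^ 2 * (δ n ^ 2)⁻¹ = -1 by field_simp [hδ n], C_neg, C_1, neg_one_mul]
  have h := (coeffwiseTendsto_const (l := atTop) (-X ^ 2 : ℝ[X])).add <|
    CoeffwiseTendsto.sum (Icc 3 d) fun i hi =>
      (coeffwiseTendsto_C (hg i (mem_Icc.mp hi).1 (mem_Icc.mp hi).2).tendsto_div_nhds_zero).mul
        (coeffwiseTendsto_const (X ^ i))
  simpa [hcomp] using h

end JensenExponent

noncomputable def shiftRatio (t A : ℕ → ℝ) (n j : ℕ) : ℝ :=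
  (t n)⁻¹ * (t (n + j) * (Real.exp (A n))⁻¹ ^ j)

section ShiftRatio

variable {t A δ : ℕ → ℝ} {d : ℕ} {g : ℕ → ℕ → ℝ}

theorem isLittleO_shiftRatio_sub_eval_expTrunc (ht : ∀ n, 0 < t n)
    (hδ0 : Tendsto δ atTop (𝓝 0))
    (hg : ∀ i, 3 ≤ i → i ≤ d → (fun n => g i n) =o[atTop] fun n => δ n ^ i)
    (hexp : ∀ j ≤ d, (fun n => Real.log (t (n + j) / t n) -
      (A n * j + (jensenExponent δ g d n).eval (j : ℝ))) =o[atTop] fun n => δ n ^ d)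
    {j : ℕ} (hj : j ≤ d) :
    (fun n => shiftRatio t A n j - (expTrunc d (jensenExponent δ g d n)).eval (j : ℝ))
      =o[atTop] fun n => δ n ^ d := by
  have hψ := isBigO_eval_jensenExponent hδ0 hg j
  have h := isLittleO_exp_add_sub_sum_range (K := d + 1) (hψ.trans_tendsto hδ0)
    ((hψ.pow (d + 1)).trans_isLittleO ((isLittleO_pow_pow d.lt_succ_self).comp_tendsto hδ0))
    (hexp j hj) ((hδ0.pow d).isBigO_one ℝ)
  refine h.congr_left fun n => ?_
  have hratio : shiftRatio t A n j = Real.exp (Real.log (t (n + j) / t n) - j * A n) := by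
    rw [shiftRatio, Real.exp_sub, Real.exp_log (div_pos (ht _) (ht n)), Real.exp_nat_mul,
      inv_pow]
    ring
  rw [eval_expTrunc, hratio]
  ring_nf

theorem tendsto_fwdDiff_iter_shiftRatio_div_pow (ht : ∀ n, 0 < t n) (hδ : ∀ n, δ n ≠ 0)
    (hδ0 : Tendsto δ atTop (𝓝 0))
    (hg : ∀ i, 3 ≤ i → i ≤ d → (fun n => g i n) =o[atTop] fun n => δ n ^ i)
    (hexp : ∀ j ≤ d, (fun n => Real.log (t (n + j) / t n) -
      (A n * j + (jensenExponent δ g d n).eval (j : ℝ))) =o[atTop] fun n => δ n ^ d)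
    {i N : ℕ} (hiN : i + N ≤ d) :
    Tendsto (fun n => Δ_[1] ^[N] (shiftRatio t A n) i / δ n ^ N) atTop
      (𝓝 (N ! * (expTrunc d (-X ^ 2)).coeff N)) := by
  set T := fun n => expTrunc d (jensenExponent δ g d n)
  have hpoly : Tendsto (fun n => Δ_[1] ^[N] (T n).eval i / δ n ^ N) atTop
      (𝓝 (N ! * (expTrunc d (-X ^ 2)).coeff N)) :=
    tendsto_fwdDiff_iter_eval_div_pow hδ hδ0
      (fun n => (natDegree_expTrunc_le d _).trans
        (Nat.mul_le_mul_left d natDegree_jensenExponent_le))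
      (by simpa only [T, expTrunc_comp] using
        (coeffwiseTendsto_jensenExponent_comp hδ hg).expTrunc d) N i
  have hrem : Tendsto (fun n => (Δ_[1] ^[N] (shiftRatio t A n) i -
      Δ_[1] ^[N] (fun j : ℕ => (T n).eval (j : ℝ)) i) / δ n ^ N) atTop (𝓝 0) :=
    ((isLittleO_fwdDiff_iter_sub fun k hk =>
      isLittleO_shiftRatio_sub_eval_expTrunc ht hδ0 hg hexp (by omega)).trans_isBigO
        (isBigO_pow_pow_of_le hδ0 (by omega : N ≤ d))).tendsto_div_nhds_zero
  refine (zero_add (_ : ℝ) ▸ hrem.add hpoly).congr fun n => ?_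
  rw [← fwdDiff_iter_comp_natCast (T n).eval]
  ring

end ShiftRatio

theorem gorz_jensen_to_hermite_general (t A δ : ℕ → ℝ) (d : ℕ)
    (ht : ∀ n, 0 < t n) (hδ : ∀ n, 0 < δ n)
    (hδ0 : Filter.Tendsto δ Filter.atTop (nhds 0))
    (g : ℕ → ℕ → ℝ)
    (hg : ∀ i, 3 ≤ i → i ≤ d → (fun n => g i n) =o[Filter.atTop] fun n => δ n ^ i)
    (hexp : ∀ j : ℕ, j ≤ d →
      (fun n => Real.log (t (n + j) / t n) -
          (A n * j - δ n ^ 2 * (j : ℝ) ^ 2 + ∑ i ∈ Finset.Icc 3 d, g i n * (j : ℝ) ^ i))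
        =o[Filter.atTop] fun n => δ n ^ d) :
    ∀ i : ℕ, Filter.Tendsto (fun n =>
        (Polynomial.C (((δ n) ^ d)⁻¹ * (t n)⁻¹) *
          (jensenPoly t d n).comp
            (Polynomial.C ((Real.exp (A n))⁻¹) *
              (Polynomial.C (δ n) * Polynomial.X - 1))).coeff i)
      Filter.atTop (nhds ((gorzHermite d).coeff i)) := by
  intro i
  simp only [coeff_C_mul, coeff_jensenPoly_comp]
  rcases lt_or_ge d i with hdi | hid
  · simp [Nat.choose_eq_zero_of_lt hdi, coeff_gorzHermite_of_lt hdi]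
  obtain ⟨N, rfl⟩ := Nat.exists_eq_add_of_le hid
  have hexp' : ∀ j ≤ i + N, (fun n => Real.log (t (n + j) / t n) -
      (A n * j + (jensenExponent δ g (i + N) n).eval (j : ℝ))) =o[atTop] fun n => δ n ^ (i + N) :=
    fun j hj => (hexp j hj).congr_left fun n => by rw [eval_jensenExponent]; ring
  rw [coeff_gorzHermite_eq_choose_mul_coeff_expTrunc i N (i + N) (by omega)]
  refine ((tendsto_fwdDiff_iter_shiftRatio_div_pow ht (fun n => (hδ n).ne') hδ0 hg hexp'
    le_rfl).const_mul ((i + N).choose i * (-1 : ℝ) ^ N)).congr fun n => ?_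
  rw [Nat.add_sub_cancel_left, show shiftRatio t A n =
    (t n)⁻¹ • fun j => t (n + j) * (Real.exp (A n))⁻¹ ^ j from rfl, fwdDiff_iter_const_smul,
    Pi.smul_apply, smul_eq_mul, pow_add]
  field_simp [(hδ n).ne']

/-- Theorem of Griffin–Ono–Rolen–Zagier: under the stated asymptotic expansion
of `log(t(n+j)/t(n))`, the renormalized Jensen polynomials
`(δ(n)^{−d}/t(n)) J_t^{d,n}((δ(n)X − 1)/e^{A(n)})` converge coefficientwise to
the Hermite polynomial `H_d`. -/
theorem gorz_jensen_to_hermite (t A δ : ℕ → ℝ) (d : ℕ) (hd : 1 ≤ d)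
    (ht : ∀ n, 0 < t n) (hA : ∀ n, 0 < A n) (hδ : ∀ n, 0 < δ n)
    (hδ0 : Filter.Tendsto δ Filter.atTop (nhds 0))
    (g : ℕ → ℕ → ℝ)
    (hg : ∀ i, 3 ≤ i → i ≤ d → (fun n => g i n) =o[Filter.atTop] fun n => δ n ^ i)
    (hexp : ∀ j : ℕ, j ≤ d →
      (fun n => Real.log (t (n + j) / t n) -
          (A n * j - δ n ^ 2 * (j : ℝ) ^ 2 + ∑ i ∈ Finset.Icc 3 d, g i n * (j : ℝ) ^ i))
        =o[Filter.atTop] fun n => δ n ^ d) :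
    ∀ i : ℕ, Filter.Tendsto (fun n =>
        (Polynomial.C (((δ n) ^ d)⁻¹ * (t n)⁻¹) *
          (jensenPoly t d n).comp
            (Polynomial.C ((Real.exp (A n))⁻¹) *
              (Polynomial.C (δ n) * Polynomial.X - 1))).coeff i)
      Filter.atTop (nhds ((gorzHermite d).coeff i)) :=
  gorz_jensen_to_hermite_general t A δ d ht hδ hδ0 g hg hexp
end
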